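/- arXiv:1803.05703 — 4 statements merged into one kernel-verified Lean document; each statement's English description precedes it below -/
import Mathlib

section
/- Let A_n, n = 1, 2, …, be events in a probability space (Ω, F, P), and let A be the set of ω ∈ Ω contained in infinitely many of the A_n (i.e., A = limsup_n A_n). If ∑_{n=1}^∞ P(A_n) = ∞, then P(A) ≥ limsup_{N→∞} (∑_{n=1}^N P(A_n))² / ∑_{1 ≤ m,n ≤ N} P(A_m ∩ A_n). -/
open MeasureTheory Filter Finset Topology

open scoped ENNReal

/-!
Cauchy–Schwarz applied to the counting function `∑_{n ∈ s} 1_{A n}`, which is supported on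
`⋃_{n ∈ s} A n`, gives the Chung–Erdős inequality
`(∑_{n ∈ s} P(A n))² ≤ (∑_{m,n ∈ s} P(A m ∩ A n)) · P(⋃_{n ∈ s} A n)`.
Apply it to `s = {K ≤ n ≤ N}`: since `∑_{n ≤ N} P(A n) → ∞`, discarding the finitely many
terms with `n < K` costs, for large `N`, no more than a factor `b²` with `b < 1` arbitrary.
So the limsup is at most `P(⋃_{n ≥ K} A n)` for every `K`, and these tail probabilities
decrease to `P(limsup A n)`.
-/

namespace ENNReal

theorem rpow_one_half_sq (x : ℝ≥0∞) : (x ^ (1 / 2 : ℝ)) ^ 2 = x := by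
  simpa using rpow_inv_natCast_pow two_ne_zero x

theorem le_of_forall_lt_one_sq_mul_le {x y : ℝ≥0∞} (h : ∀ b < 1, b ^ 2 * x ≤ y) : x ≤ y :=
  le_of_forall_lt_one_mul_le fun a ha => by
    simpa only [rpow_one_half_sq] using h (a ^ (1 / 2 : ℝ)) (rpow_lt_one ha (by norm_num))

theorem eventually_mul_add_le_of_tendsto_top {β : Type*} {l : Filter β} {S : β → ℝ≥0∞}
    (hS : Tendsto S l (𝓝 ∞)) {b c : ℝ≥0∞} (hb : b < 1) (hc : c ≠ ∞) :
    ∀ᶠ x in l, b * S x + c ≤ S x := by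
  have h1b : 1 - b ≠ 0 := (tsub_pos_of_lt hb).ne'
  filter_upwards [hS.eventually_const_le (div_lt_top hc h1b)] with x hx
  have hc_le : c ≤ (1 - b) * S x := by
    rwa [mul_comm, ← ENNReal.div_le_iff h1b (by finiteness)]
  calc b * S x + c ≤ b * S x + (1 - b) * S x := by gcongr
    _ = S x := by rw [← add_mul, add_tsub_cancel_of_le hb.le, one_mul]

end ENNReal

section

variable {α : Type*} [MeasurableSpace α]

theorem sq_lintegral_le_lintegral_sq_mul_measure_univ (μ : Measure α) {f : α → ℝ≥0∞}
    (hf : AEMeasurable f μ) : (∫⁻ x, f x ∂μ) ^ 2 ≤ (∫⁻ x, f x ^ 2 ∂μ) * μ Set.univ := by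
  have hCS := ENNReal.lintegral_mul_le_Lp_mul_Lq μ Real.HolderConjugate.two_two hf
    (aemeasurable_const (b := 1))
  simp only [Pi.mul_apply, mul_one, lintegral_const, one_pow, one_mul, ENNReal.rpow_two] at hCS
  calc (∫⁻ x, f x ∂μ) ^ 2
      ≤ ((∫⁻ x, f x ^ 2 ∂μ) ^ (1 / 2 : ℝ) * μ Set.univ ^ (1 / 2 : ℝ)) ^ 2 := by gcongr
    _ = (∫⁻ x, f x ^ 2 ∂μ) * μ Set.univ := by
        rw [mul_pow, ENNReal.rpow_one_half_sq, ENNReal.rpow_one_half_sq]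

theorem sq_sum_measure_le_sum_measure_inter_mul_measure_biUnion {ι : Type*} (μ : Measure α)
    {A : ι → Set α} (hA : ∀ i, MeasurableSet (A i)) (s : Finset ι) :
    (∑ i ∈ s, μ (A i)) ^ 2 ≤ (∑ i ∈ s, ∑ j ∈ s, μ (A i ∩ A j)) * μ (⋃ i ∈ s, A i) := by
  set f : α → ℝ≥0∞ := fun x => ∑ i ∈ s, (A i).indicator 1 x
  have hf : Measurable f := Finset.measurable_sum _ fun i _ => measurable_one.indicator (hA i)
  have hsupp : Function.support f ⊆ ⋃ i ∈ s, A i := by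
    intro x hx
    obtain ⟨i, hi, hxi⟩ := Finset.exists_ne_zero_of_sum_ne_zero hx
    exact Set.mem_biUnion hi (Set.mem_of_indicator_ne_zero hxi)
  have hint : ∫⁻ x, f x ∂μ = ∑ i ∈ s, μ (A i) := by
    rw [lintegral_finsetSum _ fun i _ => measurable_one.indicator (hA i)]
    simp only [lintegral_indicator_one (hA _)]
  have hint_sq : ∫⁻ x, f x ^ 2 ∂μ = ∑ i ∈ s, ∑ j ∈ s, μ (A i ∩ A j) := by
    have hf_sq : ∀ x, f x ^ 2 = ∑ i ∈ s, ∑ j ∈ s, (A i ∩ A j).indicator 1 x := fun x => by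
      simp only [f, sq, sum_mul_sum, Set.inter_indicator_one, Pi.mul_apply]
    simp only [hf_sq]
    rw [lintegral_finsetSum _ fun i _ => Finset.measurable_sum _ fun j _ =>
      measurable_one.indicator ((hA i).inter (hA j))]
    refine sum_congr rfl fun i _ => ?_
    rw [lintegral_finsetSum _ fun j _ => measurable_one.indicator ((hA i).inter (hA j))]
    simp only [lintegral_indicator_one ((hA i).inter (hA _))]
  calc (∑ i ∈ s, μ (A i)) ^ 2 = (∫⁻ x in ⋃ i ∈ s, A i, f x ∂μ) ^ 2 := by
        rw [setLIntegral_eq_of_support_subset hsupp, hint]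
    _ ≤ (∫⁻ x in ⋃ i ∈ s, A i, f x ^ 2 ∂μ) * μ.restrict (⋃ i ∈ s, A i) Set.univ :=
        sq_lintegral_le_lintegral_sq_mul_measure_univ _ hf.aemeasurable
    _ ≤ (∑ i ∈ s, ∑ j ∈ s, μ (A i ∩ A j)) * μ (⋃ i ∈ s, A i) := by
        rw [Measure.restrict_apply_univ, ← hint_sq]
        exact mul_le_mul_left (setLIntegral_le_lintegral _ _) _

theorem measure_setOf_frequently_mem_eq_iInf (μ : Measure α) [IsFiniteMeasure μ]
    {A : ℕ → Set α} (hA : ∀ n, MeasurableSet (A n)) :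
    μ {x | ∃ᶠ n in atTop, x ∈ A n} = ⨅ K, μ (⋃ n ≥ K, A n) := by
  have hset : {x | ∃ᶠ n in atTop, x ∈ A n} = ⋂ K, ⋃ n ≥ K, A n := by
    ext x
    simp [frequently_atTop]
  rw [hset]
  exact Antitone.measure_iInter
    (fun K K' h => Set.iUnion₂_mono' fun n hn => ⟨n, h.trans hn, subset_rfl⟩)
    (fun K => (MeasurableSet.biUnion (Set.to_countable _) fun n _ => hA n).nullMeasurableSet)
    ⟨0, measure_ne_top μ _⟩

theorem limsup_sq_div_le_measure_iUnion_ge {β : Type*} {l : Filter β} (μ : Measure α)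
    [IsFiniteMeasure μ] {A : ℕ → Set α} (hA : ∀ n, MeasurableSet (A n)) {s : β → Finset ℕ}
    (hS : Tendsto (fun x => ∑ n ∈ s x, μ (A n)) l (𝓝 ∞)) (K : ℕ) :
    limsup (fun x => (∑ n ∈ s x, μ (A n)) ^ 2 / ∑ m ∈ s x, ∑ n ∈ s x, μ (A m ∩ A n)) l ≤
      μ (⋃ n ≥ K, A n) := by
  set c := ∑ n ∈ range K, μ (A n)
  have hc : c ≠ ∞ := ENNReal.sum_ne_top.2 fun n _ => measure_ne_top μ _
  refine ENNReal.le_of_forall_lt_one_sq_mul_le fun b hb => ?_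
  rw [← ENNReal.limsup_const_mul_of_ne_top (by finiteness)]
  refine limsup_le_of_le (by isBoundedDefault) ?_
  filter_upwards [ENNReal.eventually_mul_add_le_of_tendsto_top hS hb hc] with x hx
  set t := (s x).filter (K ≤ ·)
  have hsplit : ∑ n ∈ s x, μ (A n) ≤ ∑ n ∈ t, μ (A n) + c := by
    rw [← sum_filter_add_sum_filter_not (s x) (K ≤ ·)]
    gcongr
    exact sum_le_sum_of_subset fun n hn => by simpa using (mem_filter.1 hn).2
  have hb_le : b * ∑ n ∈ s x, μ (A n) ≤ ∑ n ∈ t, μ (A n) :=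
    (ENNReal.add_le_add_iff_right hc).1 (hx.trans hsplit)
  have hsq := sq_sum_measure_le_sum_measure_inter_mul_measure_biUnion μ hA t
  calc b ^ 2 * ((∑ n ∈ s x, μ (A n)) ^ 2 / ∑ m ∈ s x, ∑ n ∈ s x, μ (A m ∩ A n))
      = (b * ∑ n ∈ s x, μ (A n)) ^ 2 / ∑ m ∈ s x, ∑ n ∈ s x, μ (A m ∩ A n) := by
        rw [mul_pow, mul_div_assoc]
    _ ≤ (∑ n ∈ t, μ (A n)) ^ 2 / ∑ m ∈ s x, ∑ n ∈ s x, μ (A m ∩ A n) := by gcongr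
    _ ≤ μ (⋃ n ≥ K, A n) := by
        refine ENNReal.div_le_of_le_mul' (hsq.trans (mul_le_mul' ?_ (measure_mono ?_)))
        · have ht : t ⊆ s x := filter_subset _ _
          exact (sum_le_sum fun i _ => sum_le_sum_of_subset ht).trans (sum_le_sum_of_subset ht)
        · exact Set.biUnion_subset_biUnion_left fun n hn => (mem_filter.1 hn).2

end

/-- A version of the second Borel–Cantelli lemma: if the events `A_1, A_2, …` in a
probability space satisfy `∑ P(A_n) = ∞`, then the probability of the limsup set is at
least `limsup_N (∑_{n=1}^N P(A_n))² / ∑_{1 ≤ m,n ≤ N} P(A_m ∩ A_n)`. -/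
theorem borel_cantelli_second
    {Ω : Type*} [MeasurableSpace Ω] (P : Measure Ω) [IsProbabilityMeasure P]
    (A : ℕ → Set Ω) (hA : ∀ n, MeasurableSet (A n))
    (hdiv : (∑' n : ℕ, P (A (n + 1))) = ⊤) :
    P {ω | ∃ᶠ n in atTop, ω ∈ A n} ≥
      limsup (fun N : ℕ =>
        (∑ n ∈ Finset.Icc 1 N, P (A n)) ^ 2 /
          ∑ m ∈ Finset.Icc 1 N, ∑ n ∈ Finset.Icc 1 N, P (A m ∩ A n)) atTop := by
  have hS : Tendsto (fun N => ∑ n ∈ Icc 1 N, P (A n)) atTop (𝓝 ∞) := by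
    have h_range : ∀ N, ∑ n ∈ Icc 1 N, P (A n) = ∑ i ∈ range N, P (A (i + 1)) := fun N => by
      rw [range_eq_Ico, sum_Ico_add' (fun n => P (A n)), ← Ico_add_one_right_eq_Icc]
    simpa only [h_range, hdiv] using ENNReal.tendsto_nat_tsum fun i => P (A (i + 1))
  rw [ge_iff_le, measure_setOf_frequently_mem_eq_iInf P hA]
  exact le_iInf (limsup_sq_div_le_measure_iUnion_ge P hA hS)
end

section
/- There is an absolute constant C > 0 such that for every integer q ≥ 3 and every integer k ≥ 1, ∏_{p prime, p | q, p > e^k} (1 − 1/p)^{−1} ≤ C · max(1, (log log q)/k). -/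
/-!
Since `(1 - 1/p)⁻¹ = 1 + 1/(p - 1) ≤ exp (1/(p - 1))` and `∑ (1/(p - 1) - 1/p) ≤ 1`, the product is
at most `e · exp (∑ 1/p)`. Put `M = max 1 (log log q / k)` and `Y = exp (k M)`, so that `log q ≤ Y`.
The primes in `(e^k, Y]` contribute at most `log log Y - log k + 3 = log M + 3`: this is Mertens'
second theorem, obtained by partial summation against `1 / log` from Mertens' first theorem
`∑_{p ≤ m} log p / p ≤ log m + log 4`, which in turn follows from `∑_{p ≤ m} ⌊m/p⌋ log p ≤ log m!`
and Chebyshev's bound `θ(m) ≤ m log 4`. The prime divisors of `q` above `Y` contribute at most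
`log q / (Y log Y) ≤ 1`, because their logarithms add up to at most `log q`.
-/

open Finset

/-- `log x` understood as `max (1, log x)`. -/
noncomputable def flog (x : ℝ) : ℝ := max 1 (Real.log x)

open Real
open scoped Nat

theorem Nat.Prime.pow_div_dvd_factorial {p : ℕ} (hp : p.Prime) (m : ℕ) : p ^ (m / p) ∣ m ! := by
  rw [hp.pow_dvd_factorial_iff (b := Nat.log p m + 2) (by omega)]
  simpa using single_le_sum (f := fun i => m / p ^ i) (fun _ _ => Nat.zero_le _)
    (show 1 ∈ Ico 1 (Nat.log p m + 2) by simp)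

theorem prod_primesLE_pow_div_dvd_factorial (m : ℕ) :
    ∏ p ∈ Nat.primesLE m, p ^ (m / p) ∣ m ! := by
  refine prod_dvd_of_isRelPrime (fun p hp r hr hpr => ?_) fun p hp => ?_
  · have hp' := (Nat.mem_primesLE.1 hp).2
    have hr' := (Nat.mem_primesLE.1 hr).2
    exact Nat.coprime_iff_isRelPrime.1 <| ((Nat.coprime_primes hp' hr').2 hpr).pow _ _
  · exact (Nat.mem_primesLE.1 hp).2.pow_div_dvd_factorial m

theorem sum_primesLE_div_mul_log_le (m : ℕ) :
    ∑ p ∈ Nat.primesLE m, ((m / p : ℕ) : ℝ) * log p ≤ m * log m := by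
  have hpos : ∀ p ∈ Nat.primesLE m, 0 < p := fun p hp => (Nat.mem_primesLE.1 hp).2.pos
  calc ∑ p ∈ Nat.primesLE m, ((m / p : ℕ) : ℝ) * log p
      = log ((∏ p ∈ Nat.primesLE m, p ^ (m / p) : ℕ) : ℝ) := by
        push_cast
        rw [log_prod fun p hp => by have := hpos p hp; positivity]
        simp only [log_pow]
    _ ≤ log (m ! : ℝ) := by
        gcongr
        · exact_mod_cast prod_pos fun p hp => pow_pos (hpos p hp) _
        · exact Nat.le_of_dvd m.factorial_pos (prod_primesLE_pow_div_dvd_factorial m)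
    _ ≤ log ((m : ℝ) ^ m) := by
        gcongr
        exact_mod_cast m.factorial_le_pow
    _ = m * log m := log_pow m m

theorem sum_primesLE_log_div_le (m : ℕ) :
    ∑ p ∈ Nat.primesLE m, log p / p ≤ log m + log 4 := by
  rcases m.eq_zero_or_pos with rfl | hm
  · simpa [Nat.primesLE] using log_nonneg (by norm_num : (1 : ℝ) ≤ 4)
  have hfloor : ∀ p ∈ Nat.primesLE m, m * (log p / p) ≤ ((m / p : ℕ) : ℝ) * log p + log p := by
    intro p hp
    have hdiv : (m : ℝ) / p ≤ (m / p : ℕ) + 1 := by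
      rw [← Nat.floor_div_eq_div (K := ℝ)]
      exact (Nat.lt_floor_add_one _).le
    calc (m : ℝ) * (log p / p) = m / p * log p := by ring
      _ ≤ ((m / p : ℕ) + 1) * log p := by gcongr
      _ = _ := by ring
  have htheta : ∑ p ∈ Nat.primesLE m, log p ≤ m * log 4 := by
    rw [← Chebyshev.theta_eq_sum_primesLE_log, mul_comm]
    exact Chebyshev.theta_le_log4_mul_x m.cast_nonneg
  have hm' : (0 : ℝ) < m := by exact_mod_cast hm
  refine le_of_mul_le_mul_left ?_ hm'
  calc (m : ℝ) * ∑ p ∈ Nat.primesLE m, log p / p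
      ≤ ∑ p ∈ Nat.primesLE m, (((m / p : ℕ) : ℝ) * log p + log p) := by
        rw [mul_sum]; exact sum_le_sum hfloor
    _ ≤ m * log m + m * log 4 := by
        rw [sum_add_distrib]; linarith [sum_primesLE_div_mul_log_le m]
    _ = m * (log m + log 4) := by ring

theorem sum_Icc_mul_by_parts {R : Type*} [CommRing R] (c g : ℕ → R) {a N : ℕ} (haN : a ≤ N) :
    ∑ i ∈ Icc a N, c i * g i =
      (∑ i ∈ Icc a N, c i) * g N + ∑ n ∈ Ico a N, (∑ i ∈ Icc a n, c i) * (g n - g (n + 1)) := by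
  induction N, haN using Nat.le_induction with
  | base => simp
  | succ N haN ih =>
    rw [sum_Icc_succ_top (by omega), sum_Icc_succ_top (by omega), sum_Ico_succ_top haN, ih]
    ring

theorem log_mul_inv_sub_inv_le_log_sub_log {x y : ℝ} (hx : 0 < x) (hy : 0 < y) :
    y * (y⁻¹ - x⁻¹) ≤ log x - log y := by
  have := one_sub_inv_le_log_of_pos (div_pos hx hy)
  rw [log_div hx.ne' hy.ne', inv_div] at this
  calc y * (y⁻¹ - x⁻¹) = 1 - y / x := by field_simp
    _ ≤ _ := this

theorem sum_prime_inv_Icc_le {a N : ℕ} (ha : 2 ≤ a) (haN : a ≤ N) :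
    ∑ p ∈ Icc a N with p.Prime, (p : ℝ)⁻¹ ≤ log (log N) - log (log a) + 3 := by
  set c : ℕ → ℝ := fun i => if i.Prime then log i / i else 0
  set g : ℕ → ℝ := fun n => (log n)⁻¹
  have hlog_pos : ∀ n : ℕ, 2 ≤ n → 0 < log n := fun n hn => log_pos (by exact_mod_cast hn)
  have hS : ∀ n, ∑ i ∈ Icc a n, c i ≤ log n + log 4 := by
    intro n
    rw [← sum_filter]
    refine (sum_le_sum_of_subset_of_nonneg (fun p hp => ?_) fun p _ _ => ?_).trans
      (sum_primesLE_log_div_le n)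
    · simp only [mem_filter, mem_Icc] at hp
      exact Nat.mem_primesLE.2 ⟨hp.1.2, hp.2⟩
    · exact div_nonneg (log_natCast_nonneg p) p.cast_nonneg
  have hg_anti : ∀ n, 2 ≤ n → 0 ≤ g n - g (n + 1) := by
    intro n hn
    have : log n ≤ log ↑(n + 1) := by gcongr; simp
    exact sub_nonneg.2 (inv_anti₀ (hlog_pos n hn) this)
  have hg_tele : ∑ n ∈ Ico a N, (g n - g (n + 1)) = g a - g N := by
    rw [← neg_sub (g N), ← sum_Ico_sub g haN, ← sum_neg_distrib]
    simp only [neg_sub]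
  have hloglog : ∀ n : ℕ, 2 ≤ n → log n * (g n - g (n + 1)) ≤ log (log ↑(n + 1)) - log (log n) :=
    fun n hn => log_mul_inv_sub_inv_le_log_sub_log (hlog_pos _ (by omega)) (hlog_pos n hn)
  have hga : log 4 * g a ≤ 2 := by
    have h4 : log 4 = 2 * log 2 := by
      rw [show (4 : ℝ) = 2 ^ 2 by norm_num, log_pow]; norm_num
    have : g a ≤ (log 2)⁻¹ :=
      inv_anti₀ (log_pos one_lt_two) (log_le_log two_pos (by exact_mod_cast ha))
    calc log 4 * g a ≤ 2 * log 2 * (log 2)⁻¹ := by rw [h4]; gcongr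
      _ = 2 := by field_simp [(log_pos one_lt_two).ne']
  have hN := hlog_pos N (ha.trans haN)
  calc ∑ p ∈ Icc a N with p.Prime, (p : ℝ)⁻¹ = ∑ i ∈ Icc a N, c i * g i := by
        rw [sum_filter]
        refine sum_congr rfl fun i _ => ?_
        split_ifs with hi
        · have := hlog_pos i hi.two_le
          simp only [c, g, if_pos hi]
          field_simp
        · simp [c, hi]
    _ = (∑ i ∈ Icc a N, c i) * g N + ∑ n ∈ Ico a N, (∑ i ∈ Icc a n, c i) * (g n - g (n + 1)) :=
        sum_Icc_mul_by_parts c g haN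
    _ ≤ (log N + log 4) * g N + ∑ n ∈ Ico a N, (log n + log 4) * (g n - g (n + 1)) :=
        add_le_add (mul_le_mul_of_nonneg_right (hS N) (inv_pos.2 hN).le) <| sum_le_sum fun n hn =>
          mul_le_mul_of_nonneg_right (hS n) (hg_anti n (ha.trans (mem_Ico.1 hn).1))
    _ ≤ 1 + log 4 * g N + ∑ n ∈ Ico a N,
          ((log (log ↑(n + 1)) - log (log n)) + log 4 * (g n - g (n + 1))) := by
        rw [add_mul, mul_inv_cancel₀ hN.ne']
        gcongr with n hn
        rw [add_mul]
        gcongr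
        exact hloglog n (ha.trans (mem_Ico.1 hn).1)
    _ = 1 + (log (log N) - log (log a)) + log 4 * g a := by
        rw [sum_add_distrib, ← mul_sum, sum_Ico_sub (fun n : ℕ => log (log n)) haN, hg_tele]
        ring
    _ ≤ _ := by linarith

theorem sum_prime_inv_le_of_mem_Ioc {s : Finset ℕ} {x y : ℝ} (hx : 1 < x) (hxy : x ≤ y)
    (hs : ∀ p ∈ s, p.Prime ∧ x < p ∧ (p : ℝ) ≤ y) :
    ∑ p ∈ s, (p : ℝ)⁻¹ ≤ log (log y) - log (log x) + 3 := by
  set a := ⌊x⌋₊ + 1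
  set N := ⌊y⌋₊
  have hx0 : 0 ≤ x := by linarith
  have hlogx : 0 < log x := log_pos hx
  have hxa : x < a := by simpa [a] using Nat.lt_floor_add_one x
  have ha : 2 ≤ a := by have := Nat.one_le_floor_iff x |>.2 hx.le; omega
  have hsub : s ⊆ {p ∈ Icc a N | p.Prime} := by
    intro p hp
    obtain ⟨hp, hxp, hpy⟩ := hs p hp
    simp only [mem_filter, mem_Icc]
    exact ⟨⟨(Nat.floor_lt hx0).2 hxp, Nat.le_floor hpy⟩, hp⟩
  by_cases haN : a ≤ N
  · have hNy : (N : ℝ) ≤ y := Nat.floor_le (hx0.trans hxy)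
    have hN : 0 < log N := log_pos (by exact_mod_cast ha.trans haN)
    calc ∑ p ∈ s, (p : ℝ)⁻¹ ≤ ∑ p ∈ Icc a N with p.Prime, (p : ℝ)⁻¹ :=
          sum_le_sum_of_subset_of_nonneg hsub fun _ _ _ => by positivity
      _ ≤ log (log N) - log (log a) + 3 := sum_prime_inv_Icc_le ha haN
      _ ≤ log (log y) - log (log x) + 3 := by
          have : log (log N) ≤ log (log y) := by gcongr; exact_mod_cast Nat.pos_of_ne_zero (by omega)
          have : log (log x) ≤ log (log a) := by gcongr
          linarith
  · have hs0 : s = ∅ := subset_empty.1 <| by simpa [Icc_eq_empty (by omega : ¬a ≤ N)] using hsub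
    have : log (log x) ≤ log (log y) := by gcongr
    simp only [hs0, sum_empty]
    linarith

theorem sum_inv_sub_one_sub_inv_le_one {s : Finset ℕ} (hs : ∀ n ∈ s, 2 ≤ n) :
    ∑ n ∈ s, (((n : ℝ) - 1)⁻¹ - (n : ℝ)⁻¹) ≤ 1 := by
  set B := s.sup id + 2
  have hsub : s ⊆ Ico 2 B := fun n hn => mem_Ico.2 ⟨hs n hn, by
    have : n ≤ s.sup id := le_sup (f := id) hn
    omega⟩
  have hnonneg : ∀ n ∈ Ico 2 B, 0 ≤ ((n : ℝ) - 1)⁻¹ - (n : ℝ)⁻¹ := by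
    intro n hn
    have : (2 : ℝ) ≤ n := by exact_mod_cast (mem_Ico.1 hn).1
    rw [sub_nonneg]
    gcongr <;> linarith
  have htele : ∑ n ∈ Ico 2 B, (((n : ℝ) - 1)⁻¹ - (n : ℝ)⁻¹) = 1 - ((B : ℝ) - 1)⁻¹ := by
    have := sum_Ico_sub (fun n : ℕ => -((n : ℝ) - 1)⁻¹) (by omega : 2 ≤ B)
    push_cast at this
    norm_num at this
    rw [sum_congr rfl fun n _ => sub_eq_neg_add _ _, this]
    ring
  have hB : (0 : ℝ) ≤ ((B : ℝ) - 1)⁻¹ := inv_nonneg.2 (by simp only [B]; push_cast; linarith)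
  calc _ ≤ ∑ n ∈ Ico 2 B, (((n : ℝ) - 1)⁻¹ - (n : ℝ)⁻¹) :=
        sum_le_sum_of_subset_of_nonneg hsub fun n hn _ => hnonneg n hn
    _ ≤ 1 := by linarith

theorem prod_inv_one_sub_inv_le_exp {s : Finset ℕ} (hs : ∀ n ∈ s, 2 ≤ n) :
    ∏ n ∈ s, (1 - 1 / (n : ℝ))⁻¹ ≤ exp (1 + ∑ n ∈ s, (n : ℝ)⁻¹) := by
  have hfactor : ∀ n ∈ s, (1 - 1 / (n : ℝ))⁻¹ = ((n : ℝ) - 1)⁻¹ + 1 := by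
    intro n hn
    have : (2 : ℝ) ≤ n := by exact_mod_cast hs n hn
    have : (n : ℝ) - 1 ≠ 0 := by linarith
    field_simp
    ring
  calc ∏ n ∈ s, (1 - 1 / (n : ℝ))⁻¹ ≤ ∏ n ∈ s, exp (((n : ℝ) - 1)⁻¹) := by
        refine prod_le_prod (fun n hn => ?_) fun n hn => ?_ <;> rw [hfactor n hn]
        · have : (2 : ℝ) ≤ n := by exact_mod_cast hs n hn
          have : 0 ≤ ((n : ℝ) - 1)⁻¹ := inv_nonneg.2 (by linarith)
          linarith
        · exact add_one_le_exp _
    _ = exp (∑ n ∈ s, ((n : ℝ) - 1)⁻¹) := (exp_sum _ _).symm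
    _ ≤ exp (1 + ∑ n ∈ s, (n : ℝ)⁻¹) := by
        have := sum_inv_sub_one_sub_inv_le_one hs
        rw [sum_sub_distrib] at this
        gcongr
        linarith

theorem sum_log_le_log_of_subset_primeFactors {s : Finset ℕ} {q : ℕ} (hs : s ⊆ q.primeFactors) :
    ∑ p ∈ s, log (p : ℝ) ≤ log q := by
  rcases eq_or_ne q 0 with rfl | hq
  · simp [subset_empty.1 (by simpa using hs)]
  have hpos : ∀ p ∈ s, 0 < p := fun p hp => (Nat.prime_of_mem_primeFactors (hs hp)).pos
  have hdvd : ∏ p ∈ s, p ∣ q := (prod_dvd_prod_of_subset _ _ id hs).trans q.prod_primeFactors_dvd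
  calc ∑ p ∈ s, log (p : ℝ) = log ((∏ p ∈ s, p : ℕ) : ℝ) := by
        push_cast
        rw [log_prod fun p hp => by have := hpos p hp; positivity]
    _ ≤ log q := by
        gcongr
        · exact_mod_cast prod_pos hpos
        · exact Nat.le_of_dvd (Nat.pos_of_ne_zero hq) hdvd

theorem sum_inv_le_log_div_of_subset_primeFactors {s : Finset ℕ} {q : ℕ} {y : ℝ} (hy : 1 < y)
    (hs : s ⊆ q.primeFactors) (hys : ∀ p ∈ s, y ≤ p) :
    ∑ p ∈ s, (p : ℝ)⁻¹ ≤ log q / (y * log y) := by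
  have hlogy : 0 < log y := log_pos hy
  calc ∑ p ∈ s, (p : ℝ)⁻¹ ≤ ∑ p ∈ s, log p / (y * log y) := by
        refine sum_le_sum fun p hp => ?_
        have hyp := hys p hp
        have : 0 < log p := log_pos (hy.trans_le hyp)
        calc (p : ℝ)⁻¹ = log p / (p * log p) := by field_simp
          _ ≤ log p / (y * log y) := by gcongr
    _ = (∑ p ∈ s, log p) / (y * log y) := (sum_div _ _ _).symm
    _ ≤ log q / (y * log y) := by
        gcongr
        exact sum_log_le_log_of_subset_primeFactors hs

theorem sum_inv_primeFactors_gt_exp_le {q : ℕ} {x y : ℝ} (hx : 0 < x) (hxy : x ≤ y) (hy : 1 ≤ y)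
    (hq : log q ≤ exp y) :
    ∑ p ∈ q.primeFactors with exp x < (p : ℕ), (p : ℝ)⁻¹ ≤ log y - log x + 4 := by
  set P := q.primeFactors.filter (fun p : ℕ => exp x < p)
  have hsmall : ∑ p ∈ P with (p : ℕ) ≤ exp y, (p : ℝ)⁻¹ ≤ log y - log x + 3 := calc
    _ ≤ log (log (exp y)) - log (log (exp x)) + 3 :=
        sum_prime_inv_le_of_mem_Ioc (one_lt_exp_iff.2 hx) (exp_le_exp.2 hxy) fun p hp => by
          simp only [P, mem_filter] at hp
          exact ⟨Nat.prime_of_mem_primeFactors hp.1.1, hp.1.2, hp.2⟩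
    _ = log y - log x + 3 := by rw [log_exp, log_exp]
  have hlarge : ∑ p ∈ P with ¬(p : ℕ) ≤ exp y, (p : ℝ)⁻¹ ≤ 1 := calc
    _ ≤ log q / (exp y * log (exp y)) :=
        sum_inv_le_log_div_of_subset_primeFactors (one_lt_exp_iff.2 (by linarith))
          (filter_subset _ _ |>.trans (filter_subset _ _)) fun p hp =>
          (not_le.1 (mem_filter.1 hp).2).le
    _ ≤ 1 := by
        rw [log_exp, div_le_one (by positivity)]
        nlinarith [exp_pos y]
  rw [← sum_filter_add_sum_filter_not P (fun p : ℕ => (p : ℝ) ≤ exp y)]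
  linarith

/-- Mertens-type bound: `∏_{p | q, p > e^k} (1 - 1/p)⁻¹ ≪ max(1, (log log q)/k)`. -/
theorem mertens_tail_product_bound :
    ∃ C : ℝ, 0 < C ∧ ∀ (q : ℕ), 3 ≤ q → ∀ (k : ℕ), 1 ≤ k →
      ∏ p ∈ q.primeFactors.filter (fun p : ℕ => (p : ℝ) > Real.exp k),
          (1 - 1 / (p : ℝ))⁻¹ ≤
        C * max 1 (flog (flog q) / k) := by
  refine ⟨exp 5, exp_pos 5, fun q _ k hk => ?_⟩
  set M := max 1 (flog (flog q) / k)
  have hk0 : (0 : ℝ) < k := by exact_mod_cast hk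
  have hM : 1 ≤ M := le_max_left _ _
  have hlogq : log q ≤ exp (k * M) := calc
    log q ≤ flog q := le_max_right _ _
    _ = exp (log (flog q)) := (exp_log (zero_lt_one.trans_le (le_max_left _ _))).symm
    _ ≤ exp (k * M) :=
        exp_le_exp.2 <| (le_max_right _ _).trans <| (div_le_iff₀' hk0).1 (le_max_right _ _)
  have hsum := sum_inv_primeFactors_gt_exp_le hk0 (le_mul_of_one_le_right hk0.le hM)
    (one_le_mul_of_one_le_of_one_le (by exact_mod_cast hk) hM) hlogq
  rw [log_mul hk0.ne' (by positivity), add_sub_cancel_left] at hsum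
  calc _ ≤ exp (1 + ∑ p ∈ q.primeFactors with exp k < (p : ℕ), (p : ℝ)⁻¹) :=
        prod_inv_one_sub_inv_le_exp fun p hp =>
          (Nat.prime_of_mem_primeFactors (mem_filter.1 hp).1).two_le
    _ ≤ exp (log M + 5) := exp_le_exp.2 (by linarith)
    _ = exp 5 * M := by rw [exp_add, exp_log (by positivity), mul_comm]
end

section
/- Let ψ: ℕ → ℝ be non-negative and let m ≠ n be positive integers. With r = ∏_{p: u_p = v_p} p^{u_p} and t = ∏_{p: u_p ≠ v_p} p^{max(u_p, v_p)} (where u_p, v_p are the exponents of p in m, n) and Δ = max(ψ(m)/m, ψ(n)/n), if 2·Δ·r·t ≤ 1 then E_m(ψ) ∩ E_n(ψ) = ∅. -/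
/-! If `x` lies in both sets, lifting to `ℝ` gives `|a/m - b/n - k| < 2Δ` for some integer `k`.
Since `r t = lcm(m, n) =: L`, the number `L (a/m - b/n - k)` is an integer of absolute value
`< 2ΔL ≤ 1`, hence zero. So `a/m - b/n` is an integer; as both fractions lie in `(0, 1]`, it
is `0`, and two equal reduced fractions have the same denominator, i.e. `m = n`. -/

open MeasureTheory Filter Finset

/-- The set `E_n(ψ) ⊆ ℝ/ℤ`, the union over `1 ≤ a ≤ n`, `gcd(a,n)=1`, of the
intervals `((a-ψ(n))/n, (a+ψ(n))/n)` taken mod 1. -/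
noncomputable def E (ψ : ℕ → ℝ) (n : ℕ) : Set UnitAddCircle :=
  ⋃ a ∈ (Finset.Icc 1 n).filter (fun a => Nat.Coprime a n),
    (fun y : ℝ => (y : UnitAddCircle)) '' Set.Ioo (((a : ℝ) - ψ n) / n) (((a : ℝ) + ψ n) / n)

/-- `W(ψ)`: points of the circle lying in infinitely many sets `E_n(ψ)`. -/
noncomputable def W (ψ : ℕ → ℝ) : Set UnitAddCircle := {x | ∃ᶠ n in atTop, x ∈ E ψ n}

namespace Nat

variable {m n : ℕ}

theorem prod_primeFactors_mul_pow_max_factorization (hm : m ≠ 0) (hn : n ≠ 0) :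
    ∏ p ∈ (m * n).primeFactors, p ^ max (m.factorization p) (n.factorization p) = m.lcm n := by
  have hsupp : (m.lcm n).primeFactors = (m * n).primeFactors := by
    rw [← support_factorization, factorization_lcm hm hn, Finsupp.support_sup,
      support_factorization, support_factorization, primeFactors_mul hm hn]
  rw [prod_primeFactors_pow_factorization (lcm_ne_zero hm hn), hsupp, factorization_lcm hm hn]
  rfl

theorem lcm_eq_prod_factorization_eq_mul_prod_factorization_ne (hm : m ≠ 0) (hn : n ≠ 0) :
    m.lcm n = (∏ p ∈ (m * n).primeFactors with m.factorization p = n.factorization p,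
        p ^ m.factorization p) *
      (∏ p ∈ (m * n).primeFactors with m.factorization p ≠ n.factorization p,
        p ^ max (m.factorization p) (n.factorization p)) := by
  rw [← prod_primeFactors_mul_pow_max_factorization hm hn,
    ← prod_filter_mul_prod_filter_not (m * n).primeFactors
      (fun p => m.factorization p = n.factorization p)]
  congr 1
  refine Finset.prod_congr rfl fun p hp => ?_
  rw [(mem_filter.mp hp).2, max_self]

theorem eq_of_mul_eq_mul_of_coprime {a b : ℕ} (ha : a.Coprime m) (hb : b.Coprime n)
    (h : a * n = b * m) : m = n :=
  dvd_antisymm (ha.symm.dvd_of_dvd_mul_left ⟨b, by rw [h, mul_comm]⟩)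
    (hb.symm.dvd_of_dvd_mul_left ⟨a, by rw [← h, mul_comm]⟩)

end Nat

theorem exists_intCast_eq_mul_div_sub_div {L m n : ℕ} (a b : ℤ) (hm : m ∣ L) (hn : n ∣ L) :
    ∃ q : ℤ, (L : ℝ) * (a / m - b / n) = q := by
  refine ⟨a * (L / m : ℕ) - b * (L / n : ℕ), ?_⟩
  rw [Int.cast_sub, Int.cast_mul, Int.cast_mul, Int.cast_natCast, Int.cast_natCast,
    Nat.cast_div_charZero hm, Nat.cast_div_charZero hn]
  ring

theorem eq_intCast_of_mul_abs_sub_lt_one {L : ℕ} {x : ℝ} {k : ℤ} (hL : L ≠ 0)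
    (hx : ∃ q : ℤ, (L : ℝ) * x = q) (h : L * |x - k| < 1) : x = k := by
  obtain ⟨q, hq⟩ := hx
  have hL' : (0 : ℝ) < L := by positivity
  have : |((q - k * L : ℤ) : ℝ)| < 1 := by
    rwa [Int.cast_sub, ← hq, Int.cast_mul, Int.cast_natCast, mul_comm (k : ℝ), ← mul_sub,
      abs_mul, Nat.abs_cast]
  have hqk : q = k * L := sub_eq_zero.mp (Int.abs_lt_one_iff.mp (by exact_mod_cast this))
  have : (L : ℝ) * x = L * k := by rw [hq, hqk]; push_cast; ring
  exact mul_left_cancel₀ hL'.ne' this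

theorem eq_of_div_sub_div_eq_intCast {a b m n : ℕ} (ha : 0 < a) (ham : a ≤ m) (hb : 0 < b)
    (hbn : b ≤ n) (hacop : a.Coprime m) (hbcop : b.Coprime n) {k : ℤ}
    (h : (a / m - b / n : ℝ) = k) : m = n := by
  have hm : (0 : ℝ) < m := by exact_mod_cast ha.trans_le ham
  have hn : (0 : ℝ) < n := by exact_mod_cast hb.trans_le hbn
  have hk : k = 0 := by
    have h1 : (a / m : ℝ) ≤ 1 := (div_le_one hm).mpr (by exact_mod_cast ham)
    have h2 : (b / n : ℝ) ≤ 1 := (div_le_one hn).mpr (by exact_mod_cast hbn)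
    have h3 : (0 : ℝ) < a / m := by positivity
    have h4 : (0 : ℝ) < b / n := by positivity
    have : (-1 : ℝ) < k ∧ (k : ℝ) < 1 := ⟨by linarith, by linarith⟩
    exact Int.abs_lt_one_iff.mp (abs_lt.mpr (by exact_mod_cast this))
  rw [hk, Int.cast_zero, sub_eq_zero, div_eq_div_iff hm.ne' hn.ne'] at h
  exact Nat.eq_of_mul_eq_mul_of_coprime hacop hbcop (by exact_mod_cast h)

theorem exists_abs_sub_lt_of_mem_E {ψ : ℕ → ℝ} {n : ℕ} {x : UnitAddCircle}
    (hx : x ∈ E ψ n) :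
    ∃ a : ℕ, 0 < a ∧ a ≤ n ∧ a.Coprime n ∧
      ∃ y : ℝ, (y : UnitAddCircle) = x ∧ |y - a / n| < ψ n / n := by
  simp only [E, Set.mem_iUnion, mem_filter, mem_Icc, Set.mem_image, Set.mem_Ioo] at hx
  obtain ⟨a, ⟨⟨ha, han⟩, hcop⟩, y, ⟨hy₁, hy₂⟩, rfl⟩ := hx
  refine ⟨a, ha, han, hcop, y, rfl, abs_sub_lt_iff.mpr ⟨?_, ?_⟩⟩
  · rw [add_div] at hy₂; linarith
  · rw [sub_div] at hy₁; linarith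

theorem UnitAddCircle.exists_intCast_eq_sub_of_coe_eq {y z : ℝ}
    (h : (y : UnitAddCircle) = z) : ∃ k : ℤ, (k : ℝ) = y - z := by
  have : ((y - z : ℝ) : UnitAddCircle) = 0 := by rw [AddCircle.coe_sub, h, sub_self]
  simpa using (AddCircle.coe_eq_zero_iff (1 : ℝ)).mp this

theorem disjoint_of_small_general (ψ : ℕ → ℝ)
    (m n : ℕ) (hm : 0 < m) (hn : 0 < n) (hmn : m ≠ n)
    (r t : ℕ)
    (hr : r = ∏ p ∈ (m * n).primeFactors.filter
        (fun p => m.factorization p = n.factorization p), p ^ m.factorization p)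
    (ht : t = ∏ p ∈ (m * n).primeFactors.filter
        (fun p => m.factorization p ≠ n.factorization p),
        p ^ max (m.factorization p) (n.factorization p))
    (hsmall : 2 * max (ψ m / m) (ψ n / n) * r * t ≤ 1) :
    E ψ m ∩ E ψ n = ∅ := by
  have hrt : m.lcm n = r * t :=
    hr ▸ ht ▸ Nat.lcm_eq_prod_factorization_eq_mul_prod_factorization_ne hm.ne' hn.ne'
  refine Set.eq_empty_iff_forall_notMem.mpr fun x ⟨hxm, hxn⟩ => hmn ?_
  obtain ⟨a, ha, ham, hacop, y, rfl, hy⟩ := exists_abs_sub_lt_of_mem_E hxm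
  obtain ⟨b, hb, hbn, hbcop, z, hzy, hz⟩ := exists_abs_sub_lt_of_mem_E hxn
  obtain ⟨k, hk⟩ := UnitAddCircle.exists_intCast_eq_sub_of_coe_eq hzy.symm
  have hclose : |(a / m - b / n : ℝ) - k| < 2 * max (ψ m / m) (ψ n / n) := by
    calc |(a / m - b / n : ℝ) - k| = |(z - b / n) - (y - a / m)| := by rw [hk]; congr 1; ring
      _ ≤ |z - b / n| + |y - a / m| := abs_sub _ _
      _ < ψ n / n + ψ m / m := add_lt_add hz hy
      _ ≤ 2 * max (ψ m / m) (ψ n / n) := by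
        linarith [le_max_left (ψ m / m) (ψ n / n), le_max_right (ψ m / m) (ψ n / n)]
  have hL : (m.lcm n : ℝ) * |(a / m - b / n : ℝ) - k| < 1 := by
    calc (m.lcm n : ℝ) * |(a / m - b / n : ℝ) - k|
        < m.lcm n * (2 * max (ψ m / m) (ψ n / n)) := by gcongr
      _ ≤ 1 := by rw [hrt]; push_cast; linarith
  have hq := exists_intCast_eq_mul_div_sub_div a b (Nat.dvd_lcm_left m n) (Nat.dvd_lcm_right m n)
  push_cast at hq
  exact eq_of_div_sub_div_eq_intCast ha ham hb hbn hacop hbcop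
    (eq_intCast_of_mul_abs_sub_lt_one (Nat.lcm_ne_zero hm.ne' hn.ne') hq hL)

/-- If `2 Δ r t ≤ 1` then `E_m(ψ)` and `E_n(ψ)` are disjoint. -/
theorem disjoint_of_small (ψ : ℕ → ℝ) (hψ : ∀ j, 0 ≤ ψ j)
    (m n : ℕ) (hm : 0 < m) (hn : 0 < n) (hmn : m ≠ n)
    (r t : ℕ)
    (hr : r = ∏ p ∈ (m * n).primeFactors.filter
        (fun p => m.factorization p = n.factorization p), p ^ m.factorization p)
    (ht : t = ∏ p ∈ (m * n).primeFactors.filter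
        (fun p => m.factorization p ≠ n.factorization p),
        p ^ max (m.factorization p) (n.factorization p))
    (hsmall : 2 * max (ψ m / m) (ψ n / n) * r * t ≤ 1) :
    E ψ m ∩ E ψ n = ∅ :=
  disjoint_of_small_general ψ m n hm hn hmn r t hr ht hsmall
end

section
/- (Gallagher's zero-one law) For every non-negative function ψ: ℕ → ℝ, the measure λ(W(ψ)) is eitherated 0 or 1. -/
/-!
Write `δ n = ψ n / n`. The set `E_n(ψ)` is the `δ n`-neighbourhood of the points of exact order `n`
of the circle, so `W(ψ)` is the set `addWellApproximable UnitAddCircle δ`. If `δ n → 0`, Gallagher's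
ergodic theorem `AddCircle.addWellApproximable_ae_empty_or_univ` applies. Otherwise `c ≤ δ n` for
some `c > 0` and infinitely many `n`. Legendre's sieve shows that among more than `4 ^ ω(n)`
consecutive integers one is coprime to `n`, and `4 ^ ω(n) = o(n)`; so for large such `n` the reduced
fractions `a / n` are `c`-dense, `E_n(ψ)` is the whole circle, and so is `W(ψ)`.
-/

open MeasureTheory Filter Finset

open Metric ArithmeticFunction
open scoped Nat Topology ArithmeticFunction.Moebius

namespace Nat

theorem le_totient_mul_two_pow_card_primeFactors (n : ℕ) : n ≤ φ n * 2 ^ #n.primeFactors := by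
  have hprod : 0 < ∏ p ∈ n.primeFactors, p :=
    prod_pos fun p hp => (prime_of_mem_primeFactors hp).pos
  refine Nat.le_of_mul_le_mul_right ?_ hprod
  calc n * ∏ p ∈ n.primeFactors, p
      ≤ n * ((∏ p ∈ n.primeFactors, (p - 1)) * 2 ^ #n.primeFactors) := by
        gcongr
        rw [← prod_const, ← prod_mul_distrib]
        exact prod_le_prod' fun p hp => by have := (prime_of_mem_primeFactors hp).two_le; omega
    _ = φ n * 2 ^ #n.primeFactors * ∏ p ∈ n.primeFactors, p := by
        rw [← mul_assoc, ← totient_mul_prod_primeFactors]; ring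

theorem pow_card_primeFactors_le (k : ℕ) {n : ℕ} (hn : n ≠ 0) :
    k ^ #n.primeFactors ≤ k ^ k * n := by
  rcases k.eq_zero_or_pos with rfl | hk
  · rw [pow_zero, one_mul]
    exact (pow_le_one₀ le_rfl zero_le_one).trans (Nat.one_le_iff_ne_zero.2 hn)
  rw [← card_filter_add_card_filter_not (· < k), pow_add]
  gcongr
  · refine (card_le_card ?_).trans_eq (card_range k)
    exact fun p hp => mem_range.2 (mem_filter.1 hp).2
  · calc k ^ #{p ∈ n.primeFactors | ¬p < k}
        ≤ ∏ p ∈ n.primeFactors with ¬p < k, p :=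
          pow_card_le_prod _ _ _ fun p hp => not_lt.1 (mem_filter.1 hp).2
      _ ≤ n := Nat.le_of_dvd (Nat.pos_of_ne_zero hn)
          ((prod_dvd_prod_of_subset _ _ _ (filter_subset _ _)).trans (prod_primeFactors_dvd n))

end Nat

theorem sum_moebius_divisors_filter_dvd {n : ℕ} (hn : n ≠ 0) (a : ℤ) :
    ∑ d ∈ n.divisors with ((d : ℕ) : ℤ) ∣ a, (μ d : ℚ) = if Int.gcd a n = 1 then 1 else 0 := by
  have hdiv : {d ∈ n.divisors | ((d : ℕ) : ℤ) ∣ a} = (Int.gcd a n).divisors := by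
    ext d
    simp [Int.gcd, Int.natCast_dvd, Nat.dvd_gcd_iff, hn]
    tauto
  have h := congrArg (· (Int.gcd a n)) (coe_moebius_mul_coe_zeta (R := ℚ))
  simp only [coe_mul_zeta_apply, intCoe_apply, one_apply] at h
  rw [hdiv, h]

theorem card_filter_gcd_eq_one_eq_sum_moebius {n : ℕ} (hn : n ≠ 0) (s : Finset ℤ) :
    (#{a ∈ s | Int.gcd a n = 1} : ℚ) = ∑ d ∈ n.divisors, (μ d : ℚ) * #{a ∈ s | (d : ℤ) ∣ a} := by
  simp_rw [card_filter, Nat.cast_sum, Nat.cast_ite, Nat.cast_one, Nat.cast_zero,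
    ← sum_moebius_divisors_filter_dvd hn, sum_filter, mul_sum, mul_ite, mul_one, mul_zero]
  exact sum_comm

theorem abs_card_filter_dvd_Ioc_sub_lt (x : ℤ) (H : ℕ) {d : ℕ} (hd : 0 < d) :
    |(#{a ∈ Ioc x (x + H) | (d : ℤ) ∣ a} : ℚ) - H / d| < 1 := by
  rw [← Int.cast_natCast, Int.Ioc_filter_dvd_card _ _ (by exact_mod_cast hd)]
  have hd' : (0 : ℚ) < d := by exact_mod_cast hd
  have hsplit : ((x + H : ℤ) : ℚ) / (d : ℤ) = x / d + H / d := by push_cast; ring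
  rw [hsplit]
  have hmono : ⌊((x : ℤ) : ℚ) / (d : ℤ)⌋ ≤ ⌊(x : ℚ) / d + H / d⌋ :=
    Int.floor_mono (by push_cast; linarith [div_nonneg (Nat.cast_nonneg H) hd'.le])
  rw [max_eq_left (sub_nonneg.2 hmono)]
  push_cast
  have hx_le := Int.floor_le ((x : ℚ) / d)
  have hx_lt := Int.lt_floor_add_one ((x : ℚ) / d)
  have hxH_le := Int.floor_le ((x : ℚ) / d + H / d)
  have hxH_lt := Int.lt_floor_add_one ((x : ℚ) / d + H / d)
  rw [abs_sub_lt_iff]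
  constructor <;> linarith

theorem sum_moebius_div_eq_totient_div {n : ℕ} (hn : n ≠ 0) :
    ∑ d ∈ n.divisors, (μ d : ℚ) / d = φ n / n := by
  have h := (sum_eq_iff_sum_mul_moebius_eq (R := ℚ) (f := fun m => (φ m : ℚ))
    (g := fun m => (m : ℚ))).1 (fun m _ => by exact_mod_cast Nat.sum_totient m) n
    (Nat.pos_of_ne_zero hn)
  rw [Nat.sum_divisorsAntidiagonal (fun a b => (μ a : ℚ) * b)] at h
  rw [eq_div_iff (by exact_mod_cast hn), sum_mul, ← h]
  refine sum_congr rfl fun d hd => ?_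
  have hd0 : (d : ℚ) ≠ 0 := by exact_mod_cast (Nat.pos_of_mem_divisors hd).ne'
  rw [Nat.cast_div (Nat.dvd_of_mem_divisors hd) hd0]
  field_simp

theorem sum_abs_moebius_divisors {n : ℕ} (hn : n ≠ 0) :
    ∑ d ∈ n.divisors, |(μ d : ℚ)| = 2 ^ #n.primeFactors := by
  simp_rw [← Int.cast_abs, abs_moebius, apply_ite (Int.cast : ℤ → ℚ), Int.cast_one, Int.cast_zero,
    ← sum_filter, Nat.sum_divisors_filter_squarefree hn, sum_const, card_powerset, nsmul_eq_mul,
    mul_one]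
  simp [UniqueFactorizationMonoid.toFinset_normalizedFactors,
    UniqueFactorizationMonoid.primeFactors_eq_natPrimeFactors]

theorem mul_totient_div_sub_le_card_filter_gcd_eq_one {n : ℕ} (hn : n ≠ 0) (x : ℤ) (H : ℕ) :
    H * (φ n / n : ℚ) - 2 ^ #n.primeFactors ≤ #{a ∈ Ioc x (x + H) | Int.gcd a n = 1} := by
  rw [card_filter_gcd_eq_one_eq_sum_moebius hn, ← sum_moebius_div_eq_totient_div hn,
    ← sum_abs_moebius_divisors hn, mul_sum, ← sum_sub_distrib]
  refine sum_le_sum fun d hd => ?_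
  have herr := abs_card_filter_dvd_Ioc_sub_lt x H (Nat.pos_of_mem_divisors hd)
  have hμ : |(μ d : ℚ) * (#{a ∈ Ioc x (x + H) | (d : ℤ) ∣ a} - H / d)| ≤ |(μ d : ℚ)| := by
    rw [abs_mul]
    exact mul_le_of_le_one_right (abs_nonneg _) herr.le
  have hswap : (H : ℚ) * (μ d / d) = μ d * (H / d) := by ring
  linarith [(abs_le.1 hμ).1, mul_sub (μ d : ℚ) #{a ∈ Ioc x (x + H) | (d : ℤ) ∣ a} (H / d)]

theorem exists_gcd_eq_one_mem_Ioc {n : ℕ} (hn : n ≠ 0) (x : ℤ) {H : ℕ}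
    (hH : 4 ^ #n.primeFactors < H) : ∃ a ∈ Ioc x (x + H), Int.gcd a n = 1 := by
  suffices (0 : ℚ) < #{a ∈ Ioc x (x + H) | Int.gcd a n = 1} by
    obtain ⟨a, ha⟩ := card_pos.1 (by exact_mod_cast this)
    exact ⟨a, (mem_filter.1 ha).1, (mem_filter.1 ha).2⟩
  refine lt_of_lt_of_le ?_ (mul_totient_div_sub_le_card_filter_gcd_eq_one hn x H)
  set k := #n.primeFactors
  have hφn : (n : ℚ) ≤ φ n * 2 ^ k := by
    exact_mod_cast Nat.le_totient_mul_two_pow_card_primeFactors n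
  have hφ : (0 : ℚ) < φ n := by exact_mod_cast Nat.totient_pos.2 (Nat.pos_of_ne_zero hn)
  have hH' : (4 : ℚ) ^ k < H := by exact_mod_cast hH
  rw [sub_pos, mul_div_assoc', lt_div_iff₀ (by exact_mod_cast Nat.pos_of_ne_zero hn)]
  calc (2 : ℚ) ^ k * n ≤ 2 ^ k * (φ n * 2 ^ k) := by gcongr
    _ = 4 ^ k * φ n := by rw [show (4 : ℚ) = 2 * 2 by norm_num, mul_pow]; ring
    _ < H * φ n := by gcongr

theorem eventually_two_mul_four_pow_card_primeFactors_lt {c : ℝ} (hc : 0 < c) :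
    ∀ᶠ n : ℕ in atTop, 2 * (4 : ℝ) ^ #n.primeFactors < c * n := by
  obtain ⟨N, hN⟩ := exists_nat_gt (4 * 16 ^ 16 / c ^ 2)
  filter_upwards [eventually_ge_atTop (max N 1)] with n hn
  have hn1 : 1 ≤ n := le_of_max_le_right hn
  have hNn : (N : ℝ) ≤ n := by exact_mod_cast le_of_max_le_left hn
  have h16 : (16 : ℝ) ^ #n.primeFactors ≤ 16 ^ 16 * n := by
    exact_mod_cast Nat.pow_card_primeFactors_le 16 (by omega)
  rw [div_lt_iff₀ (by positivity)] at hN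
  refine lt_of_pow_lt_pow_left₀ 2 (by positivity) ?_
  calc (2 * (4 : ℝ) ^ #n.primeFactors) ^ 2 = 4 * 16 ^ #n.primeFactors := by
        rw [mul_pow, ← pow_mul, mul_comm #n.primeFactors, pow_mul]; norm_num
    _ ≤ 4 * 16 ^ 16 * n := by linarith
    _ < N * c ^ 2 * n := by gcongr
    _ ≤ n * c ^ 2 * n := by gcongr
    _ = (c * n) ^ 2 := by ring

theorem AddCircle.image_coe_Ioo_eq_ball (p c δ : ℝ) :
    ((↑) : ℝ → AddCircle p) '' Set.Ioo (c - δ) (c + δ) = Metric.ball (c : AddCircle p) δ := by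
  ext u
  rw [mem_ball, dist_eq_norm, QuotientAddGroup.norm_lt_iff]
  constructor
  · rintro ⟨y, hy, rfl⟩
    refine ⟨y - c, rfl, ?_⟩
    rw [Real.norm_eq_abs, abs_sub_lt_iff]
    constructor <;> linarith [hy.1, hy.2]
  · rintro ⟨m, hm, hlt⟩
    rw [Real.norm_eq_abs, abs_lt] at hlt
    refine ⟨m + c, ⟨by linarith, by linarith⟩, ?_⟩
    rw [AddCircle.coe_add, ← eq_sub_iff_add_eq]
    exact hm

theorem UnitAddCircle.setOf_addOrderOf_eq {n : ℕ} (hn : 0 < n) :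
    {u : UnitAddCircle | addOrderOf u = n} =
      (fun a : ℕ => ((a / n : ℝ) : UnitAddCircle)) ''
        ↑({a ∈ Finset.Icc 1 n | a.Coprime n} : Finset ℕ) := by
  refine Set.Subset.antisymm ?_ ?_
  · intro u hu
    obtain ⟨m, hmn, hcop, rfl⟩ := (AddCircle.addOrderOf_eq_pos_iff hn).1 hu
    rcases m.eq_zero_or_pos with rfl | hm
    · obtain rfl : n = 1 := by simpa using hcop
      exact ⟨1, by simp, by simp [AddCircle.coe_period]⟩
    · exact ⟨m, mem_filter.2 ⟨mem_Icc.2 ⟨hm, hmn.le⟩, hcop⟩, by simp⟩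
  · rintro _ ⟨a, ha, rfl⟩
    simpa using AddCircle.addOrderOf_div_of_gcd_eq_one (p := (1 : ℝ)) hn (mem_filter.1 ha).2

theorem E_eq_approxAddOrderOf (ψ : ℕ → ℝ) {n : ℕ} (hn : 0 < n) :
    E ψ n = approxAddOrderOf UnitAddCircle n (ψ n / n) := by
  rw [approxAddOrderOf, UnitAddCircle.setOf_addOrderOf_eq hn, thickening_eq_biUnion_ball,
    Set.biUnion_image, E]
  simp_rw [sub_div, add_div, AddCircle.image_coe_Ioo_eq_ball, mem_coe]

theorem W_eq_addWellApproximable (ψ : ℕ → ℝ) :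
    W ψ = addWellApproximable UnitAddCircle (fun n => ψ n / n) := by
  ext x
  rw [W, Set.mem_ofPred_eq, addWellApproximable, blimsup_eq_limsup, mem_limsup_iff_frequently_mem,
    frequently_inf_principal]
  refine frequently_congr ((eventually_gt_atTop 0).mono fun n hn => ?_)
  simp [E_eq_approxAddOrderOf ψ hn, hn]

theorem UnitAddCircle.approxAddOrderOf_eq_univ {n : ℕ} {c : ℝ}
    (h : 2 * (4 : ℝ) ^ #n.primeFactors < c * n) :
    approxAddOrderOf UnitAddCircle n c = Set.univ := by
  obtain rfl | hn := n.eq_zero_or_pos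
  · norm_num at h
  have hn' : (0 : ℝ) < n := by exact_mod_cast hn
  refine Set.eq_univ_of_forall fun u => ?_
  obtain ⟨y, rfl⟩ := QuotientAddGroup.mk_surjective u
  obtain ⟨a, ha, hcop⟩ :=
    exists_gcd_eq_one_mem_Ioc hn.ne' ⌊n * y⌋ (lt_add_one (4 ^ #n.primeFactors))
  rw [Finset.mem_Ioc] at ha
  refine mem_thickening_iff.2 ⟨((a / n * 1 : ℝ) : UnitAddCircle),
    AddCircle.addOrderOf_div_of_gcd_eq_one' hn hcop, ?_⟩
  rw [mul_one, ← mem_ball, ← AddCircle.image_coe_Ioo_eq_ball]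
  refine ⟨y, ?_, rfl⟩
  have ha_lo : ((⌊n * y⌋ : ℤ) : ℝ) + 1 ≤ a := by exact_mod_cast ha.1
  have ha_hi : (a : ℝ) ≤ ⌊n * y⌋ + (4 ^ #n.primeFactors + 1) := by exact_mod_cast ha.2
  have hfloor_le := Int.floor_le ((n : ℝ) * y)
  have hlt_floor := Int.lt_floor_add_one ((n : ℝ) * y)
  have hpow : (1 : ℝ) ≤ 4 ^ #n.primeFactors := one_le_pow₀ (by norm_num)
  constructor
  · rw [sub_lt_iff_lt_add, div_lt_iff₀ hn']
    linarith
  · rw [← sub_lt_iff_lt_add, lt_div_iff₀ hn']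
    linarith

theorem UnitAddCircle.addWellApproximable_eq_univ {δ : ℕ → ℝ} {c : ℝ} (hc : 0 < c)
    (hδ : ∃ᶠ n in atTop, c ≤ δ n) : addWellApproximable UnitAddCircle δ = Set.univ := by
  refine Set.eq_univ_of_forall fun x => ?_
  rw [addWellApproximable, blimsup_eq_limsup, mem_limsup_iff_frequently_mem,
    frequently_inf_principal]
  refine (hδ.and_eventually ((eventually_gt_atTop 0).and
    (eventually_two_mul_four_pow_card_primeFactors_lt hc))).mono fun n ⟨hcδ, hn, hdense⟩ => ?_
  refine ⟨hn, thickening_mono hcδ _ ?_⟩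
  rw [← approxAddOrderOf, approxAddOrderOf_eq_univ hdense]
  exact Set.mem_univ x

theorem UnitAddCircle.volume_addWellApproximable_eq_zero_or_one {δ : ℕ → ℝ} (hδ : ∀ n, 0 ≤ δ n) :
    volume (addWellApproximable UnitAddCircle δ) = 0 ∨
      volume (addWellApproximable UnitAddCircle δ) = 1 := by
  by_cases h : ∀ c > 0, ∀ᶠ n in atTop, δ n < c
  · have hlim : Tendsto δ atTop (𝓝 0) :=
      tendsto_order.2 ⟨fun c hc => .of_forall fun n => hc.trans_le (hδ n), h⟩
    rcases AddCircle.addWellApproximable_ae_empty_or_univ (T := 1) δ hlim with hnull | hfull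
    · exact Or.inl (measure_eq_zero_iff_ae_notMem.2 hnull)
    · exact Or.inr ((measure_congr (eventuallyEq_univ.2 hfull)).trans UnitAddCircle.measure_univ)
  · push Not at h
    obtain ⟨c, hc, hfreq⟩ := h
    exact Or.inr (by rw [addWellApproximable_eq_univ hc hfreq, UnitAddCircle.measure_univ])

/-- Gallagher's zero-one law: `λ(W(ψ))` is either `0` or `1`. -/
theorem gallagher_zero_one (ψ : ℕ → ℝ) (hψ : ∀ n, 0 ≤ ψ n) :
    volume (W ψ) = 0 ∨ volume (W ψ) = 1 := by
  rw [W_eq_addWellApproximable]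
  exact UnitAddCircle.volume_addWellApproximable_eq_zero_or_one fun n =>
    div_nonneg (hψ n) n.cast_nonneg
end
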